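/- arXiv:1607.05430 — 3 statements merged into one kernel-verified Lean document; each statement's English description precedes it below -/
import Mathlib

section
/- Under Assumptions (A1), (A2), (A3) and (A4), the semiparametric efficient Fisher information matrix J̃ is nonsingular. -/
open MeasureTheory Filter Finset Matrix

noncomputable section

namespace SemiMix

/-- The unit cube `[0,1]³`. -/
def cube : Set (Fin 3 → ℝ) := Set.univ.pi fun _ => Set.Icc (0:ℝ) 1

/-- The unit interval `[0,1]`. -/
def unitInt : Set ℝ := Set.Icc (0:ℝ) 1

/-- Mixture density `g_{θ,f}` with `k+1` populations. -/
def gmix (k : ℕ) (θ : Fin (k+1) → ℝ) (f : Fin (k+1) → Fin 3 → ℝ → ℝ)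
    (x : Fin 3 → ℝ) : ℝ :=
  ∑ j, θ j * ∏ c, f j c (x c)

/-- Expectation `E*[φ(X)]` under the true law. -/
def Estar (k : ℕ) (θ : Fin (k+1) → ℝ) (f : Fin (k+1) → Fin 3 → ℝ → ℝ)
    (φ : (Fin 3 → ℝ) → ℝ) : ℝ :=
  ∫ x in cube, φ x * gmix k θ f x

/-- Length `|I_m|` of a bin. -/
def len {M : ℕ} (I : Fin (M+1) → Set ℝ) (m : Fin (M+1)) : ℝ := (volume (I m)).toReal

/-- Step density `f_ω` on the partition `I` with bin weights `w`. -/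
def stepFun {M : ℕ} (I : Fin (M+1) → Set ℝ) (w : Fin (M+1) → ℝ) (u : ℝ) : ℝ :=
  ∑ m, (w m / len I m) * (I m).indicator 1 u

/-- Bin masses `ω*` of a density `f`. -/
def wstar {M : ℕ} (I : Fin (M+1) → Set ℝ) (f : ℝ → ℝ) (m : Fin (M+1)) : ℝ :=
  ∫ u in I m, f u

/-- Approximate model density `g_{θ,ω;M}`. -/
def gapp (k M : ℕ) (I : Fin (M+1) → Set ℝ) (θ : Fin (k+1) → ℝ)
    (ω : Fin (k+1) → Fin 3 → Fin (M+1) → ℝ) (x : Fin 3 → ℝ) : ℝ :=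
  ∑ j, θ j * ∏ c, stepFun I (ω j c) (x c)

/-- Histogram approximation `f_{ω*}` of a density `f` on the partition `I`. -/
def fM {M : ℕ} (I : Fin (M+1) → Set ℝ) (f : ℝ → ℝ) : ℝ → ℝ :=
  stepFun I (wstar I f)

/-- Model density `g_{θ*,ω*_M;M}` at the true binned parameters. -/
def gstarM (k M : ℕ) (I : Fin (M+1) → Set ℝ) (θ : Fin (k+1) → ℝ)
    (f : Fin (k+1) → Fin 3 → ℝ → ℝ) (x : Fin 3 → ℝ) : ℝ :=
  gapp k M I θ (fun j c => wstar I (f j c)) x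

/-- θ-score `(S*_{θ,M})_j` in the approximation model. -/
def scoreθ (k M : ℕ) (I : Fin (M+1) → Set ℝ) (θ : Fin (k+1) → ℝ)
    (f : Fin (k+1) → Fin 3 → ℝ → ℝ) (j : Fin k) (x : Fin 3 → ℝ) : ℝ :=
  (∏ c, fM I (f j.castSucc c) (x c) - ∏ c, fM I (f (Fin.last k) c) (x c))
    / gstarM k M I θ f x

/-- ω-score `(S*_{ω,M})_{j,c,m}` in the approximation model. -/
def scoreω (k M : ℕ) (I : Fin (M+1) → Set ℝ) (θ : Fin (k+1) → ℝ)
    (f : Fin (k+1) → Fin 3 → ℝ → ℝ) (j : Fin (k+1)) (c : Fin 3) (m : Fin M)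
    (x : Fin 3 → ℝ) : ℝ :=
  θ j * ((I m.castSucc).indicator 1 (x c) / len I m.castSucc
      - (I (Fin.last M)).indicator 1 (x c) / len I (Fin.last M))
    * (∏ c' ∈ Finset.univ.erase c, fM I (f j c') (x c'))
    / gstarM k M I θ f x

/-- Index set for the nuisance coordinates of the score vector. -/
abbrev ωIdx (k M : ℕ) := Fin (k+1) × Fin 3 × Fin M

/-- Full score vector `S*_M = (S*_{θ,M}, S*_{ω,M})`. -/
def score (k M : ℕ) (I : Fin (M+1) → Set ℝ) (θ : Fin (k+1) → ℝ)
    (f : Fin (k+1) → Fin 3 → ℝ → ℝ) : Fin k ⊕ ωIdx k M → (Fin 3 → ℝ) → ℝ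
  | Sum.inl j => scoreθ k M I θ f j
  | Sum.inr (j, c, m) => scoreω k M I θ f j c m

/-- Fisher information `J_M = E*[S*_M S*_Mᵀ]`. -/
def JM (k M : ℕ) (I : Fin (M+1) → Set ℝ) (θ : Fin (k+1) → ℝ)
    (f : Fin (k+1) → Fin 3 → ℝ → ℝ) :
    Matrix (Fin k ⊕ ωIdx k M) (Fin k ⊕ ωIdx k M) ℝ :=
  fun a b => Estar k θ f fun x => score k M I θ f a x * score k M I θ f b x

/-- θθ-block of the Fisher information. -/
def Jθθ (k M : ℕ) (I : Fin (M+1) → Set ℝ) (θ : Fin (k+1) → ℝ)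
    (f : Fin (k+1) → Fin 3 → ℝ → ℝ) : Matrix (Fin k) (Fin k) ℝ :=
  fun a b => JM k M I θ f (Sum.inl a) (Sum.inl b)

/-- θω-block of the Fisher information. -/
def Jθω (k M : ℕ) (I : Fin (M+1) → Set ℝ) (θ : Fin (k+1) → ℝ)
    (f : Fin (k+1) → Fin 3 → ℝ → ℝ) : Matrix (Fin k) (ωIdx k M) ℝ :=
  fun a b => JM k M I θ f (Sum.inl a) (Sum.inr b)

/-- ωω-block of the Fisher information. -/
def Jωω (k M : ℕ) (I : Fin (M+1) → Set ℝ) (θ : Fin (k+1) → ℝ)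
    (f : Fin (k+1) → Fin 3 → ℝ → ℝ) : Matrix (ωIdx k M) (ωIdx k M) ℝ :=
  fun a b => JM k M I θ f (Sum.inr a) (Sum.inr b)

/-- Efficient Fisher information `J̃_M` for `θ` in the approximation model
(Schur complement of the ωω-block). -/
def effFisherM (k M : ℕ) (I : Fin (M+1) → Set ℝ) (θ : Fin (k+1) → ℝ)
    (f : Fin (k+1) → Fin 3 → ℝ → ℝ) : Matrix (Fin k) (Fin k) ℝ :=
  Jθθ k M I θ f - Jθω k M I θ f * (Jωω k M I θ f)⁻¹ * (Jθω k M I θ f)ᵀ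

/-- Efficient score function `ψ̃_M` for `θ` in the approximation model. -/
def effScoreM (k M : ℕ) (I : Fin (M+1) → Set ℝ) (θ : Fin (k+1) → ℝ)
    (f : Fin (k+1) → Fin 3 → ℝ → ℝ) (j : Fin k) (x : Fin 3 → ℝ) : ℝ :=
  scoreθ k M I θ f j x
    - ∑ b : ωIdx k M, (Jθω k M I θ f * (Jωω k M I θ f)⁻¹) j b
        * score k M I θ f (Sum.inr b) x

/-- `I` is a Borel partition of `[0,1]`. -/
def IsPartition {M : ℕ} (I : Fin (M+1) → Set ℝ) : Prop :=
  (∀ m, MeasurableSet (I m)) ∧ (Pairwise fun m m' => Disjoint (I m) (I m'))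
    ∧ (⋃ m, I m) = unitInt

/-- `f` is a family of probability densities on `[0,1]`. -/
def IsDensityFamily (k : ℕ) (f : Fin (k+1) → Fin 3 → ℝ → ℝ) : Prop :=
  ∀ j c, Measurable (f j c) ∧ (∀ u, 0 ≤ f j c u) ∧ ∫ u in unitInt, f j c u = 1

/-- `I₁` is a coarser partition than `I₂`. -/
def Coarser {M₁ M₂ : ℕ} (I₁ : Fin (M₁+1) → Set ℝ) (I₂ : Fin (M₂+1) → Set ℝ) : Prop :=
  ∀ m₁, ∃ S : Set (Fin (M₂+1)), I₁ m₁ = ⋃ m₂ ∈ S, I₂ m₂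

end SemiMix

namespace SemiMix

/-- The true law `P*` of one observation (density `g_{θ*,f*}` on the cube). -/
def μstar (k : ℕ) (θ : Fin (k+1) → ℝ) (f : Fin (k+1) → Fin 3 → ℝ → ℝ) :
    Measure (Fin 3 → ℝ) :=
  (volume.restrict cube).withDensity fun x => ENNReal.ofReal (gmix k θ f x)

/-- The measure `f(u) du` on `[0,1]` associated with an emission density. -/
def emissionMeasure (f : ℝ → ℝ) : Measure ℝ :=
  (volume.restrict unitInt).withDensity fun u => ENNReal.ofReal (f u)

/-- The tangent set `𝓟̇` for the nuisance parameter, inside `L²(g_{θ*,f*}dx)`: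
the functions `x ↦ h(x_c) ∏_{c'} f*_{j,c'}(x_{c'}) / g_{θ*,f*}(x)` with
`h ∈ L²(f*_{j,c}dx)` and `∫ h f*_{j,c} dx = 0`. -/
def tangentSet (k : ℕ) (θ : Fin (k+1) → ℝ) (f : Fin (k+1) → Fin 3 → ℝ → ℝ) :
    Set (Lp ℝ 2 (μstar k θ f)) :=
  {F | ∃ (j : Fin (k+1)) (c : Fin 3) (h : ℝ → ℝ),
    MemLp h 2 (emissionMeasure (f j c)) ∧ (∫ u in unitInt, h u * f j c u) = 0 ∧
    (F : (Fin 3 → ℝ) → ℝ) =ᵐ[μstar k θ f]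
      fun x => h (x c) * (∏ c', f j c' (x c')) / gmix k θ f x}

/-- The closed linear span of the tangent set. -/
def Pdot (k : ℕ) (θ : Fin (k+1) → ℝ) (f : Fin (k+1) → Fin 3 → ℝ → ℝ) :
    Submodule ℝ (Lp ℝ 2 (μstar k θ f)) :=
  (Submodule.span ℝ (tangentSet k θ f)).topologicalClosure

/-- The orthogonal projection `𝔸` onto the closure of the span of the tangent
set in `L²(g_{θ*,f*}dx)`. -/
def projA (k : ℕ) (θ : Fin (k+1) → ℝ) (f : Fin (k+1) → Fin 3 → ℝ → ℝ) :
    Lp ℝ 2 (μstar k θ f) →L[ℝ] ↥(Pdot k θ f) :=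
  haveI : CompleteSpace ↥(Pdot k θ f) :=
    IsComplete.completeSpace_coe (Submodule.isClosed_topologicalClosure _).isComplete
  Submodule.orthogonalProjectionOnto (Pdot k θ f)

/-- Semiparametric θ-score `(S*_θ)_j`. -/
def Sθstar (k : ℕ) (θ : Fin (k+1) → ℝ) (f : Fin (k+1) → Fin 3 → ℝ → ℝ)
    (j : Fin k) (x : Fin 3 → ℝ) : ℝ :=
  (∏ c, f j.castSucc c (x c) - ∏ c, f (Fin.last k) c (x c)) / gmix k θ f x

open Classical in
/-- The θ-score as an element of `L²(g_{θ*,f*}dx)`. -/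
def SθstarLp (k : ℕ) (θ : Fin (k+1) → ℝ) (f : Fin (k+1) → Fin 3 → ℝ → ℝ)
    (j : Fin k) : Lp ℝ 2 (μstar k θ f) :=
  if h : MemLp (Sθstar k θ f j) 2 (μstar k θ f) then h.toLp _ else 0

/-- The semiparametric efficient score `ψ̃_j = (S*_θ)_j - 𝔸 (S*_θ)_j` as an
element of `L²(g_{θ*,f*}dx)`. -/
def effScore (k : ℕ) (θ : Fin (k+1) → ℝ) (f : Fin (k+1) → Fin 3 → ℝ → ℝ)
    (j : Fin k) : Lp ℝ 2 (μstar k θ f) :=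
  SθstarLp k θ f j - ((projA k θ f (SθstarLp k θ f j) : ↥(Pdot k θ f)) : Lp ℝ 2 (μstar k θ f))

/-- A representative of the semiparametric efficient score `ψ̃_j`. -/
def effScoreFun (k : ℕ) (θ : Fin (k+1) → ℝ) (f : Fin (k+1) → Fin 3 → ℝ → ℝ)
    (j : Fin k) : (Fin 3 → ℝ) → ℝ :=
  ⇑(effScore k θ f j)

/-- The semiparametric efficient Fisher information `J̃ = E*[ψ̃ ψ̃ᵀ]`. -/
def Jtilde (k : ℕ) (θ : Fin (k+1) → ℝ) (f : Fin (k+1) → Fin 3 → ℝ → ℝ) :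
    Matrix (Fin k) (Fin k) ℝ :=
  fun j j' => ∫ x, effScoreFun k θ f j x * effScoreFun k θ f j' x ∂(μstar k θ f)

end SemiMix

/-!
`J̃` is the Gram matrix of the efficient scores `ψ̃_i = S_i - 𝔸 S_i` in `L²(P*)`, so it suffices
to show that they are linearly independent. Fix `i₀`. Since the emission densities of each
coordinate are linearly independent (A1), there are bounded `u_c` with `∫ u_c f*_{j,c} = δ_{j,i₀}`.
The bounded function `F(x) = u₀u₁u₂ - (u₀u₁ + u₀u₂ + u₁u₂)/2` integrates to `-δ_{j,i₀}/2` against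
each `∏_c f*_{j,c}` and to `0` against every tangent direction `h(x_c) ∏_c' f*_{j,c'}` with
`∫ h f*_{j,c} = 0`. Hence `F ⊥ 𝓟̇`, and `⟪F, ψ̃_i⟫ = ⟪F, S_i⟫ = -δ_{i,i₀}/2` singles out `ψ̃_{i₀}`.
-/

section InnerProductSpace

variable {E ι : Type*} [NormedAddCommGroup E] [InnerProductSpace ℝ E]

theorem inner_eq_zero_of_mem_topologicalClosure_span {s : Set E} {F G : E}
    (hF : ∀ G ∈ s, inner ℝ F G = 0) (hG : G ∈ (Submodule.span ℝ s).topologicalClosure) :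
    inner ℝ F G = 0 := by
  have : (Submodule.span ℝ s).topologicalClosure ≤ LinearMap.ker (innerSL ℝ F).toLinearMap :=
    Submodule.topologicalClosure_minimal _ (Submodule.span_le.2 hF)
      (innerSL ℝ F).isClosed_ker
  exact this hG

theorem linearIndependent_of_forall_exists_inner [Fintype ι] {v : ι → E}
    (h : ∀ i₀, ∃ F : E, inner ℝ F (v i₀) ≠ 0 ∧ ∀ i ≠ i₀, inner ℝ F (v i) = 0) :
    LinearIndependent ℝ v := by
  refine Fintype.linearIndependent_iff.2 fun a ha i₀ => ?_
  obtain ⟨F, hF₀, hF⟩ := h i₀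
  have : inner ℝ F (∑ i, a i • v i) = a i₀ * inner ℝ F (v i₀) := by
    simp only [inner_sum, real_inner_smul_right]
    exact Finset.sum_eq_single i₀ (fun i _ hi => by rw [hF i hi, mul_zero]) (by simp)
  rw [ha, inner_zero_right, eq_comm, mul_eq_zero] at this
  exact this.resolve_right hF₀

end InnerProductSpace

theorem MeasureTheory.L2.inner_eq_integral_of_ae_eq {α : Type*} [MeasurableSpace α]
    {μ : Measure α} {F : Lp ℝ 2 μ} {φ : α → ℝ} (hF : F =ᵐ[μ] φ) (G : Lp ℝ 2 μ) :
    inner ℝ F G = ∫ x, φ x * G x ∂μ := by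
  rw [L2.inner_def]
  refine integral_congr_ae ?_
  filter_upwards [hF] with x hx
  simp [hx, mul_comm]

section WithDensity

variable {α : Type*} [MeasurableSpace α] {ν : Measure α} {ρ : α → ℝ}

theorem integral_withDensity_ofReal (hρm : Measurable ρ) (hρ : ∀ᵐ t ∂ν, 0 ≤ ρ t) (φ : α → ℝ) :
    ∫ t, φ t ∂(ν.withDensity fun t => ENNReal.ofReal (ρ t)) = ∫ t, ρ t * φ t ∂ν := by
  rw [integral_withDensity_eq_integral_toReal_smul hρm.ennreal_ofReal
    (Eventually.of_forall fun _ => ENNReal.ofReal_lt_top)]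
  refine integral_congr_ae ?_
  filter_upwards [hρ] with t ht
  rw [ENNReal.toReal_ofReal ht, smul_eq_mul]

theorem integrable_mul_of_memLp_withDensity (hρm : Measurable ρ) (hρ : ∀ t, 0 ≤ ρ t)
    (hρi : Integrable ρ ν) {h : α → ℝ}
    (hh : MemLp h 2 (ν.withDensity fun t => ENNReal.ofReal (ρ t))) :
    Integrable (fun t => h t * ρ t) ν := by
  have := isFiniteMeasure_withDensity_ofReal hρi.2
  have h1 := memLp_one_iff_integrable.1 (hh.mono_exponent (by norm_num))
  rw [integrable_withDensity_iff_integrable_smul' hρm.ennreal_ofReal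
    (Eventually.of_forall fun _ => ENNReal.ofReal_lt_top)] at h1
  simpa [ENNReal.toReal_ofReal (hρ _), mul_comm] using h1

end WithDensity

section Moments

variable {Ω ι : Type*} [MeasurableSpace Ω] {μ : Measure Ω} {f : ι → Ω → ℝ}

theorem exists_bounded_integral_mul_eq_of_mem_span (hf : ∀ j, Integrable (f j) μ)
    {y : ι → ℝ} (hy : y ∈ Submodule.span ℝ
      (Set.range fun s : {s : Set Ω // MeasurableSet s} => fun j => ∫ t in s, f j t ∂μ)) :
    ∃ u : Ω → ℝ, Measurable u ∧ (∃ C, ∀ t, |u t| ≤ C) ∧ ∀ j, ∫ t, u t * f j t ∂μ = y j := by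
  have hint : ∀ {u : Ω → ℝ}, Measurable u → (∃ C, ∀ t, |u t| ≤ C) → ∀ j,
      Integrable (fun t => u t * f j t) μ := fun hu ⟨C, hC⟩ j =>
    (hf j).bdd_mul hu.aestronglyMeasurable (c := C) (Eventually.of_forall hC)
  induction hy using Submodule.span_induction with
  | mem y hy =>
    obtain ⟨⟨s, hs⟩, rfl⟩ := hy
    refine ⟨s.indicator 1, measurable_one.indicator hs, ⟨1, fun t => ?_⟩, fun j => ?_⟩
    · by_cases ht : t ∈ s <;> simp [ht]
    · show _ = ∫ t in s, f j t ∂μ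
      rw [← integral_indicator hs]
      congr 1 with t
      by_cases ht : t ∈ s <;> simp [ht]
  | zero => exact ⟨0, measurable_const, ⟨0, by simp⟩, by simp⟩
  | add y z _ _ hy hz =>
    obtain ⟨u, hum, ⟨C, hC⟩, huy⟩ := hy
    obtain ⟨v, hvm, ⟨D, hD⟩, hvz⟩ := hz
    refine ⟨u + v, hum.add hvm, ⟨C + D, fun t => (abs_add_le _ _).trans (add_le_add (hC t) (hD t))⟩,
      fun j => ?_⟩
    simp only [Pi.add_apply, add_mul]
    rw [integral_add (hint hum ⟨C, hC⟩ j) (hint hvm ⟨D, hD⟩ j), huy, hvz]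
  | smul a y _ hy =>
    obtain ⟨u, hum, ⟨C, hC⟩, huy⟩ := hy
    refine ⟨a • u, hum.const_smul a, ⟨|a| * C, fun t => ?_⟩, fun j => ?_⟩
    · simpa [abs_mul] using mul_le_mul_of_nonneg_left (hC t) (abs_nonneg a)
    · simp [mul_assoc, integral_const_mul, huy]

theorem exists_bounded_integral_mul_eq [Fintype ι] (hf : ∀ j, Integrable (f j) μ)
    (hindep : ∀ α : ι → ℝ, (∀ᵐ t ∂μ, ∑ j, α j * f j t = 0) → α = 0) (y : ι → ℝ) :
    ∃ u : Ω → ℝ, Measurable u ∧ (∃ C, ∀ t, |u t| ≤ C) ∧ ∀ j, ∫ t, u t * f j t ∂μ = y j := by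
  classical
  refine exists_bounded_integral_mul_eq_of_mem_span hf ?_
  set V := Submodule.span ℝ
      (Set.range fun s : {s : Set Ω // MeasurableSet s} => fun j => ∫ t in s, f j t ∂μ)
  suffices V = ⊤ by simp [this]
  by_contra hV
  obtain ⟨φ, hφ, hVφ⟩ := V.exists_le_ker_of_lt_top (lt_top_iff_ne_top.2 hV)
  set α : ι → ℝ := fun j => φ fun i => if j = i then 1 else 0
  have hφα : ∀ z, φ z = ∑ j, α j * z j := fun z => by
    simp only [φ.pi_apply_eq_sum_univ z, smul_eq_mul, mul_comm, α]
  have hint : Integrable (fun t => ∑ j, α j * f j t) μ :=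
    integrable_finsetSum _ fun j _ => (hf j).const_mul _
  have hzero : (fun t => ∑ j, α j * f j t) =ᵐ[μ] 0 := by
    refine hint.ae_eq_zero_of_forall_setIntegral_eq_zero fun s hs _ => ?_
    have := hVφ (Submodule.subset_span ⟨⟨s, hs⟩, rfl⟩)
    rw [LinearMap.mem_ker, hφα] at this
    rw [integral_finsetSum _ fun j _ => ((hf j).const_mul _).integrableOn]
    simpa only [integral_const_mul] using this
  refine hφ (LinearMap.ext fun z => ?_)
  rw [hφα, hindep α hzero]
  simp

end Moments

namespace SemiMix

variable {k : ℕ} {θ : Fin (k+1) → ℝ} {f : Fin (k+1) → Fin 3 → ℝ → ℝ}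

theorem volume_restrict_cube :
    volume.restrict cube = Measure.pi fun _ : Fin 3 => volume.restrict unitInt :=
  Measure.restrict_pi_pi _ _

theorem integral_cube_prod (φ : Fin 3 → ℝ → ℝ) :
    ∫ x in cube, ∏ c, φ c (x c) = ∏ c, ∫ t in unitInt, φ c t := by
  rw [volume_restrict_cube, integral_fintype_prod_eq_prod]

theorem integrable_cube_prod {φ : Fin 3 → ℝ → ℝ}
    (hφ : ∀ c, Integrable (φ c) (volume.restrict unitInt)) :
    Integrable (fun x => ∏ c, φ c (x c)) (volume.restrict cube) := by
  rw [volume_restrict_cube]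
  exact .fintype_prod hφ

theorem IsDensityFamily.integrable (hf : IsDensityFamily k f) (j : Fin (k+1)) (c : Fin 3) :
    Integrable (f j c) (volume.restrict unitInt) :=
  .of_integral_ne_zero (by rw [(hf j c).2.2]; exact one_ne_zero)

theorem IsDensityFamily.measurable_prod (hf : IsDensityFamily k f) (j : Fin (k+1)) :
    Measurable fun x : Fin 3 → ℝ => ∏ c, f j c (x c) :=
  Finset.measurable_prod _ fun c _ => (hf j c).1.comp (measurable_pi_apply c)

theorem IsDensityFamily.prod_nonneg (hf : IsDensityFamily k f) (j : Fin (k+1)) (x : Fin 3 → ℝ) :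
    0 ≤ ∏ c, f j c (x c) :=
  Finset.prod_nonneg fun c _ => (hf j c).2.1 _

theorem measurable_gmix (hf : IsDensityFamily k f) : Measurable (gmix k θ f) :=
  Finset.measurable_sum _ fun j _ => (hf.measurable_prod j).const_mul _

theorem integrable_gmix (hf : IsDensityFamily k f) :
    Integrable (gmix k θ f) (volume.restrict cube) :=
  integrable_finsetSum _ fun j _ => (integrable_cube_prod (hf.integrable j)).const_mul _

theorem mul_prod_le_gmix (hθ : ∀ j, 0 ≤ θ j) (hf : IsDensityFamily k f) (j : Fin (k+1))
    (x : Fin 3 → ℝ) : θ j * ∏ c, f j c (x c) ≤ gmix k θ f x :=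
  Finset.single_le_sum (f := fun j => θ j * ∏ c, f j c (x c))
    (fun j _ => mul_nonneg (hθ j) (hf.prod_nonneg j x)) (Finset.mem_univ j)

theorem gmix_nonneg (hθ : ∀ j, 0 ≤ θ j) (hf : IsDensityFamily k f) (x : Fin 3 → ℝ) :
    0 ≤ gmix k θ f x :=
  Finset.sum_nonneg fun j _ => mul_nonneg (hθ j) (hf.prod_nonneg j x)

-- where `g` vanishes, so does every `∏_c f_{j,c}`, as `θ_j > 0`
theorem gmix_mul_prod_div_gmix (hθ : ∀ j, 0 < θ j) (hf : IsDensityFamily k f) (j : Fin (k+1))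
    (x : Fin 3 → ℝ) : gmix k θ f x * ((∏ c, f j c (x c)) / gmix k θ f x) = ∏ c, f j c (x c) := by
  rcases eq_or_ne (gmix k θ f x) 0 with hg | hg
  · have := mul_prod_le_gmix (fun j => (hθ j).le) hf j x
    rw [hg] at this ⊢
    have := hf.prod_nonneg j x
    nlinarith [hθ j]
  · exact mul_div_cancel₀ _ hg

theorem prod_div_gmix_le (hθ : ∀ j, 0 < θ j) (hf : IsDensityFamily k f) (j : Fin (k+1))
    (x : Fin 3 → ℝ) : (∏ c, f j c (x c)) / gmix k θ f x ≤ (θ j)⁻¹ := by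
  rcases (gmix_nonneg (fun j => (hθ j).le) hf x).eq_or_lt with hg | hg
  · simp [← hg, (hθ j).le]
  · rw [div_le_iff₀ hg, inv_mul_eq_div, le_div_iff₀ (hθ j), mul_comm]
    exact mul_prod_le_gmix (fun j => (hθ j).le) hf j x

theorem isFiniteMeasure_μstar (hf : IsDensityFamily k f) : IsFiniteMeasure (μstar k θ f) :=
  isFiniteMeasure_withDensity_ofReal (integrable_gmix hf).2

theorem integral_μstar (hθ : ∀ j, 0 ≤ θ j) (hf : IsDensityFamily k f) (φ : (Fin 3 → ℝ) → ℝ) :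
    ∫ x, φ x ∂(μstar k θ f) = ∫ x in cube, gmix k θ f x * φ x :=
  integral_withDensity_ofReal (measurable_gmix hf) (Eventually.of_forall (gmix_nonneg hθ hf)) φ

theorem memLp_Sθstar (hθ : ∀ j, 0 < θ j) (hf : IsDensityFamily k f) (i : Fin k) :
    MemLp (Sθstar k θ f i) 2 (μstar k θ f) := by
  have := isFiniteMeasure_μstar (θ := θ) hf
  have hdiv : ∀ j x, |(∏ c, f j c (x c)) / gmix k θ f x| ≤ (θ j)⁻¹ := fun j x => by
    rw [abs_of_nonneg (div_nonneg (hf.prod_nonneg j x) (gmix_nonneg (fun j => (hθ j).le) hf x))]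
    exact prod_div_gmix_le hθ hf j x
  refine .of_bound ?_ ((θ i.castSucc)⁻¹ + (θ (Fin.last k))⁻¹) (Eventually.of_forall fun x => ?_)
  · exact (((hf.measurable_prod _).sub (hf.measurable_prod _)).div
      (measurable_gmix hf)).aestronglyMeasurable
  · rw [Real.norm_eq_abs, Sθstar, sub_div]
    exact (abs_sub _ _).trans (add_le_add (hdiv _ x) (hdiv _ x))

theorem SθstarLp_ae_eq (hθ : ∀ j, 0 < θ j) (hf : IsDensityFamily k f) (i : Fin k) :
    SθstarLp k θ f i =ᵐ[μstar k θ f] Sθstar k θ f i := by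
  rw [SθstarLp, dif_pos (memLp_Sθstar hθ hf i)]
  exact MemLp.coeFn_toLp _

theorem Jtilde_eq_gram : Jtilde k θ f = gram ℝ (effScore k θ f) := by
  ext i j
  simp [Jtilde, gram, effScoreFun, L2.inner_def, mul_comm]

-- The weight `1/2` makes `testFun u` orthogonal to the tangent directions: against
-- `h(x_c) ∏_c' f_{j,c'}` only `(e² - e) ∫ h u_c f_{j,c}` survives, where `e ∈ {0, 1}` is the
-- common value of the other two moments (`integral_testFun_mul_tangent`).
def testFun (u : Fin 3 → ℝ → ℝ) (x : Fin 3 → ℝ) : ℝ :=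
  u 0 (x 0) * u 1 (x 1) * u 2 (x 2)
    - (u 0 (x 0) * u 1 (x 1) + u 0 (x 0) * u 2 (x 2) + u 1 (x 1) * u 2 (x 2)) / 2

section TestFunction

variable {u : Fin 3 → ℝ → ℝ}

theorem measurable_testFun (hu : ∀ c, Measurable (u c)) : Measurable (testFun u) := by
  unfold testFun
  fun_prop

theorem exists_abs_testFun_le (hub : ∀ c, ∃ C, ∀ t, |u c t| ≤ C) :
    ∃ C, ∀ x, |testFun u x| ≤ C := by
  choose C hC using hub
  set B := ∑ c, |C c|
  have hB : ∀ c t, |u c t| ≤ B := fun c t => (hC c t).trans <| (le_abs_self _).trans <|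
    Finset.single_le_sum (f := fun c => |C c|) (fun _ _ => abs_nonneg _) (Finset.mem_univ c)
  refine ⟨B * B * B + (B * B + B * B + B * B) / 2, fun x => ?_⟩
  calc |testFun u x|
      ≤ |u 0 (x 0) * u 1 (x 1) * u 2 (x 2)|
        + |(u 0 (x 0) * u 1 (x 1) + u 0 (x 0) * u 2 (x 2) + u 1 (x 1) * u 2 (x 2)) / 2| :=
        abs_sub _ _
    _ ≤ |u 0 (x 0)| * |u 1 (x 1)| * |u 2 (x 2)| + (|u 0 (x 0)| * |u 1 (x 1)|
          + |u 0 (x 0)| * |u 2 (x 2)| + |u 1 (x 1)| * |u 2 (x 2)|) / 2 := by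
        rw [abs_mul, abs_mul, abs_div, abs_two]
        gcongr
        exact (abs_add_three _ _ _).trans_eq (by simp only [abs_mul])
    _ ≤ _ := by gcongr <;> apply hB

theorem memLp_testFun {μ : Measure (Fin 3 → ℝ)} [IsFiniteMeasure μ] (hu : ∀ c, Measurable (u c))
    (hub : ∀ c, ∃ C, ∀ t, |u c t| ≤ C) : MemLp (testFun u) 2 μ :=
  have ⟨C, hC⟩ := exists_abs_testFun_le hub
  .of_bound (measurable_testFun hu).aestronglyMeasurable C (Eventually.of_forall hC)

theorem integral_testFun_mul_prod {ψ : Fin 3 → ℝ → ℝ} {m n : Fin 3 → ℝ}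
    (hu : ∀ c, Measurable (u c)) (hub : ∀ c, ∃ C, ∀ t, |u c t| ≤ C)
    (hψ : ∀ c, Integrable (ψ c) (volume.restrict unitInt))
    (hm : ∀ c, ∫ t in unitInt, u c t * ψ c t = m c) (hn : ∀ c, ∫ t in unitInt, ψ c t = n c) :
    ∫ x in cube, testFun u x * ∏ c, ψ c (x c)
      = m 0 * m 1 * m 2 - (m 0 * m 1 * n 2 + m 0 * n 1 * m 2 + n 0 * m 1 * m 2) / 2 := by
  have huψ : ∀ c, Integrable (fun t => u c t * ψ c t) (volume.restrict unitInt) := fun c =>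
    (hψ c).bdd_mul (hu c).aestronglyMeasurable (c := (hub c).choose)
      (Eventually.of_forall (hub c).choose_spec)
  let term (S : Finset (Fin 3)) (x : Fin 3 → ℝ) : ℝ :=
    ∏ c, (if c ∈ S then u c (x c) * ψ c (x c) else ψ c (x c))
  have hterm : ∀ S, ∫ x in cube, term S x = ∏ c, if c ∈ S then m c else n c := fun S => by
    rw [integral_cube_prod (fun c t => if c ∈ S then u c t * ψ c t else ψ c t)]
    congr 1 with c
    split_ifs <;> simp [hm, hn]
  have hint : ∀ S, Integrable (term S) (volume.restrict cube) := fun S =>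
    integrable_cube_prod (φ := fun c t => if c ∈ S then u c t * ψ c t else ψ c t) fun c => by
      split_ifs
      exacts [huψ c, hψ c]
  have hexpand : (fun x => testFun u x * ∏ c, ψ c (x c))
      = fun x => term univ x - (term {0, 1} x + term {0, 2} x + term {1, 2} x) / 2 := by
    ext x
    simp only [term, testFun, Fin.prod_univ_three, mem_univ, mem_insert, mem_singleton,
      Fin.reduceEq, ↓reduceIte, or_self, or_true, or_false]
    ring
  have hint₂ : Integrable (fun x => term {0, 1} x + term {0, 2} x) (volume.restrict cube) :=
    (hint _).add (hint _)
  have hint₃ : Integrable (fun x => term {0, 1} x + term {0, 2} x + term {1, 2} x)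
      (volume.restrict cube) := hint₂.add (hint _)
  rw [hexpand, integral_sub (hint _) (hint₃.div_const 2), integral_div, integral_add hint₂ (hint _),
    integral_add (hint _) (hint _), hterm, hterm, hterm, hterm]
  simp [Fin.prod_univ_three]

variable {j₀ : Fin (k+1)}

theorem integral_testFun_mul_prod_density (hf : IsDensityFamily k f)
    (hu : ∀ c, Measurable (u c)) (hub : ∀ c, ∃ C, ∀ t, |u c t| ≤ C)
    (hmom : ∀ c j, ∫ t in unitInt, u c t * f j c t = if j = j₀ then 1 else 0) (j : Fin (k+1)) :
    ∫ x in cube, testFun u x * ∏ c, f j c (x c) = if j = j₀ then -1/2 else 0 := by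
  rw [integral_testFun_mul_prod hu hub (hf.integrable j) (hmom · j) (fun c => (hf j c).2.2)]
  split_ifs <;> norm_num

theorem integral_testFun_mul_tangent (hf : IsDensityFamily k f)
    (hu : ∀ c, Measurable (u c)) (hub : ∀ c, ∃ C, ∀ t, |u c t| ≤ C)
    (hmom : ∀ c j, ∫ t in unitInt, u c t * f j c t = if j = j₀ then 1 else 0)
    (j : Fin (k+1)) (c : Fin 3) {h : ℝ → ℝ}
    (hh : Integrable (fun t => h t * f j c t) (volume.restrict unitInt))
    (hh0 : ∫ t in unitInt, h t * f j c t = 0) :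
    ∫ x in cube, testFun u x * (h (x c) * ∏ c', f j c' (x c')) = 0 := by
  set ψ : Fin 3 → ℝ → ℝ := fun c' t => if c' = c then h t * f j c' t else f j c' t
  set A := ∫ t in unitInt, u c t * (h t * f j c t)
  set e : ℝ := if j = j₀ then 1 else 0
  have he : e * e = e := by simp only [e]; split_ifs <;> norm_num
  have hψ : ∀ x : Fin 3 → ℝ, ∏ c', ψ c' (x c') = h (x c) * ∏ c', f j c' (x c') := fun x =>
    calc ∏ c', ψ c' (x c') = ∏ c', (if c' = c then h (x c') else 1) * f j c' (x c') :=
          Finset.prod_congr rfl fun c' _ => by simp only [ψ]; split_ifs <;> simp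
      _ = h (x c) * ∏ c', f j c' (x c') := by
          rw [Finset.prod_mul_distrib, Finset.prod_ite_eq', if_pos (Finset.mem_univ c)]
  simp_rw [← hψ]
  rw [integral_testFun_mul_prod hu hub (m := fun c' => if c' = c then A else e)
    (n := fun c' => if c' = c then 0 else 1)]
  · fin_cases c <;>
      simp only [Fin.zero_eta, Fin.mk_one, Fin.reduceFinMk, Fin.reduceEq, ↓reduceIte, mul_one,
        mul_zero, zero_mul, one_mul, add_zero, zero_add] <;>
      linear_combination A * he
  all_goals intro c'; rcases eq_or_ne c' c with rfl | hc
  · simpa [ψ] using hh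
  · simpa [ψ, hc] using hf.integrable j c'
  · simp [ψ, A]
  · simpa [ψ, hc] using hmom c' j
  · simpa [ψ] using hh0
  · simpa [ψ, hc] using (hf j c').2.2

variable {F : Lp ℝ 2 (μstar k θ f)}

theorem inner_tangentSet_eq_zero (hθ : ∀ j, 0 < θ j) (hf : IsDensityFamily k f)
    (hu : ∀ c, Measurable (u c)) (hub : ∀ c, ∃ C, ∀ t, |u c t| ≤ C)
    (hmom : ∀ c j, ∫ t in unitInt, u c t * f j c t = if j = j₀ then 1 else 0)
    (hF : F =ᵐ[μstar k θ f] testFun u) {G : Lp ℝ 2 (μstar k θ f)} (hG : G ∈ tangentSet k θ f) :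
    inner ℝ F G = 0 := by
  obtain ⟨j, c, h, hh, hh0, hGh⟩ := hG
  rw [L2.inner_eq_integral_of_ae_eq hF,
    integral_congr_ae (hGh.mono fun x hx => by rw [hx]), integral_μstar (fun j => (hθ j).le) hf]
  have hcancel : ∀ x, gmix k θ f x * (testFun u x * (h (x c) * (∏ c', f j c' (x c')) / gmix k θ f x))
      = testFun u x * (h (x c) * ∏ c', f j c' (x c')) := fun x => by
    rw [mul_div_assoc, mul_left_comm, mul_left_comm _ (h (x c)), gmix_mul_prod_div_gmix hθ hf]
  simp_rw [hcancel]
  exact integral_testFun_mul_tangent hf hu hub hmom j c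
    (integrable_mul_of_memLp_withDensity (hf j c).1 (hf j c).2.1 (hf.integrable j c) hh) hh0

theorem inner_SθstarLp (hθ : ∀ j, 0 < θ j) (hf : IsDensityFamily k f)
    (hu : ∀ c, Measurable (u c)) (hub : ∀ c, ∃ C, ∀ t, |u c t| ≤ C) {i₀ : Fin k}
    (hmom : ∀ c j, ∫ t in unitInt, u c t * f j c t = if j = i₀.castSucc then 1 else 0)
    (hF : F =ᵐ[μstar k θ f] testFun u) (i : Fin k) :
    inner ℝ F (SθstarLp k θ f i) = if i = i₀ then -1/2 else 0 := by
  rw [L2.inner_eq_integral_of_ae_eq hF,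
    integral_congr_ae ((SθstarLp_ae_eq hθ hf i).mono fun x hx => by rw [hx]),
    integral_μstar (fun j => (hθ j).le) hf]
  have hcancel : ∀ x, gmix k θ f x * (testFun u x * Sθstar k θ f i x)
      = testFun u x * ∏ c, f i.castSucc c (x c) - testFun u x * ∏ c, f (Fin.last k) c (x c) :=
    fun x => by
      rw [Sθstar, sub_div, mul_sub, mul_sub, mul_left_comm, gmix_mul_prod_div_gmix hθ hf,
        mul_left_comm, gmix_mul_prod_div_gmix hθ hf]
  obtain ⟨C, hC⟩ := exists_abs_testFun_le hub
  have hint : ∀ j, Integrable (fun x => testFun u x * ∏ c, f j c (x c)) (volume.restrict cube) :=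
    fun j => (integrable_cube_prod (hf.integrable j)).bdd_mul
      (measurable_testFun hu).aestronglyMeasurable (Eventually.of_forall hC)
  simp_rw [hcancel]
  rw [integral_sub (hint _) (hint _), integral_testFun_mul_prod_density hf hu hub hmom,
    integral_testFun_mul_prod_density hf hu hub hmom]
  simp [Fin.castSucc_inj, (Fin.castSucc_lt_last i₀).ne']

theorem inner_effScore (hθ : ∀ j, 0 < θ j) (hf : IsDensityFamily k f)
    (hu : ∀ c, Measurable (u c)) (hub : ∀ c, ∃ C, ∀ t, |u c t| ≤ C) {i₀ : Fin k}
    (hmom : ∀ c j, ∫ t in unitInt, u c t * f j c t = if j = i₀.castSucc then 1 else 0)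
    (hF : F =ᵐ[μstar k θ f] testFun u) (i : Fin k) :
    inner ℝ F (effScore k θ f i) = if i = i₀ then -1/2 else 0 := by
  rw [effScore, inner_sub_right, inner_SθstarLp hθ hf hu hub hmom hF,
    inner_eq_zero_of_mem_topologicalClosure_span
      (fun G hG => inner_tangentSet_eq_zero hθ hf hu hub hmom hF hG) (projA k θ f _).2, sub_zero]

end TestFunction

theorem linearIndependent_effScore (hθ : ∀ j, 0 < θ j) (hf : IsDensityFamily k f)
    (hindep : ∀ c : Fin 3, ∀ α : Fin (k+1) → ℝ,
      (∀ᵐ t ∂(volume.restrict unitInt), ∑ j, α j * f j c t = 0) → α = 0) :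
    LinearIndependent ℝ (effScore k θ f) := by
  refine linearIndependent_of_forall_exists_inner fun i₀ => ?_
  choose u hu hub hmom using fun c => exists_bounded_integral_mul_eq (hf.integrable · c) (hindep c)
    (fun j => if j = i₀.castSucc then 1 else 0)
  have := isFiniteMeasure_μstar (θ := θ) hf
  have hF := memLp_testFun (μ := μstar k θ f) hu hub
  refine ⟨hF.toLp, ?_, fun i hi => ?_⟩ <;> rw [inner_effScore hθ hf hu hub hmom hF.coeFn_toLp]
  · norm_num
  · simp [hi]

end SemiMix

open SemiMix in
theorem stmt_3_general (k : ℕ)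
    (θstar : Fin (k+1) → ℝ)
    (fstar : Fin (k+1) → Fin 3 → ℝ → ℝ) (hf : IsDensityFamily k fstar)
    -- (A1)
    (hθpos : ∀ j, 0 < θstar j)
    (hindep : ∀ c : Fin 3, ∀ α : Fin (k+1) → ℝ,
      (∀ᵐ u ∂(volume.restrict unitInt), ∑ j, α j * fstar j c u = 0) → α = 0) :
    (Jtilde k θstar fstar).det ≠ 0 := by
  rw [Jtilde_eq_gram, det_gram_ne_zero_iff_linearIndependent]
  exact linearIndependent_effScore hθpos hf hindep

open SemiMix in
/-- Proposition 3 of the paper: under (A1), (A2), (A3) and (A4), the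
semiparametric efficient Fisher information matrix `J̃` is nonsingular. -/
theorem stmt_3 (k : ℕ) (hk : 1 ≤ k)
    (θstar : Fin (k+1) → ℝ) (hθsum : ∑ j, θstar j = 1)
    (fstar : Fin (k+1) → Fin 3 → ℝ → ℝ) (hf : IsDensityFamily k fstar)
    -- (A1)
    (hθpos : ∀ j, 0 < θstar j)
    (hindep : ∀ c : Fin 3, ∀ α : Fin (k+1) → ℝ,
      (∀ᵐ u ∂(volume.restrict unitInt), ∑ j, α j * fstar j c u = 0) → α = 0)
    -- the collection of partitions
    (I : (M : ℕ) → Fin (M+1) → Set ℝ) (hI : ∀ M, IsPartition (I M))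
    -- (A2)
    (hint : ∀ M m, (I M m).OrdConnected ∧ (interior (I M m)).Nonempty)
    (hmesh : ∀ ε > 0, ∃ M₀, ∀ M ≥ M₀, ∀ m, len (I M) m < ε)
    -- (A3)
    (hA3 : ∃ δ : ℝ, 0 < δ ∧
      (∀ x ∈ cube, δ ≤ gmix k θstar fstar x ∧ gmix k θstar fstar x ≤ 1/δ) ∧
      ∀ ε > 0, ∃ M₀, ∀ M ≥ M₀, ∀ x ∈ cube,
        |gstarM k M (I M) θstar fstar x - gmix k θstar fstar x| ≤ ε)
    -- (A4)
    (hA4 : ∃ Mp : ℕ → ℕ, ∀ p, Coarser (I (Mp p)) (I (Mp (p+1)))) :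
    (Jtilde k θstar fstar).det ≠ 0 :=
  stmt_3_general k θstar fstar hf hθpos hindep
end
end

section
/- Let 𝓜 be a set and A, B, C, R : 𝓜 → ℝ functions. If for all m, m' ∈ 𝓜, (C(m) − R(m)) − (C(m') − R(m')) ≤ A(m) + B(m'), then for every ρ > 0 and every m̂ ∈ 𝓜 satisfying C(m̂) ≤ inf_{m∈𝓜} C(m) + ρ, one has R(m̂) − B(m̂) ≤ inf_{m∈𝓜} {R(m) + A(m)} + ρ. -/
theorem stmt_11_general {M : Type*} [Nonempty M] (A B C R : M → ℝ)
    (hC : BddBelow (Set.range C))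
    (hyp : ∀ m m' : M, (C m - R m) - (C m' - R m') ≤ A m + B m')
    (ρ : ℝ)
    (mhat : M) (hmhat : C mhat ≤ (⨅ m, C m) + ρ) :
    R mhat - B mhat ≤ (⨅ m, R m + A m) + ρ := by
  have hmhat_le : ∀ m, C mhat ≤ C m + ρ := fun m => hmhat.trans (by linarith [ciInf_le hC m])
  have hlower : ∀ m, R mhat - B mhat - ρ ≤ R m + A m := fun m => by
    linarith [hyp m mhat, hmhat_le m]
  linarith [le_ciInf hlower]

/-- **Arlot's lemma** (Lemma 2.1 of Arlot), the deterministic step behind the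
oracle inequality: if the criterion `C` estimates the risk `R` up to errors
`A`, `B`, then any `ρ`-approximate minimizer of `C` almost minimizes `R`. -/
theorem stmt_11 {M : Type*} [Nonempty M] (A B C R : M → ℝ)
    (hC : BddBelow (Set.range C))
    (hRA : BddBelow (Set.range fun m => R m + A m))
    (hyp : ∀ m m' : M, (C m - R m) - (C m' - R m') ≤ A m + B m')
    (ρ : ℝ) (hρ : 0 < ρ)
    (mhat : M) (hmhat : C mhat ≤ (⨅ m, C m) + ρ) :
    R mhat - B mhat ≤ (⨅ m, R m + A m) + ρ :=
  stmt_11_general A B C R hC hyp ρ mhat hmhat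
end

section
/- Let f_1,…,f_k be probability densities on [0,1] such that the measures f_1dx,…,f_kdx are linearly independent, and let (𝓘_M)_{M∈𝓜} be a sequence of partitions of [0,1] into intervals with nonempty interior whose mesh max_{1≤m≤M}|I_m| tends to 0 as M → ∞. For each M and each j, let f_{j;M} be the step function f_{j;M} = Σ_{m=1}^M ((∫_{I_m} f_j(u)du)/|I_m|) 1_{I_m}. Then for all sufficiently large M, the measures f_{1;M}dx,…,f_{k;M}dx are linearly independent. -/
/-!
The histogram operator `T h = ∑ₘ (⨍_{Pₘ} h) 𝟙_{Pₘ}` is a contraction for `∫ |·|`, and for a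
uniformly continuous `g` the error `∫ |T g - g|` is controlled by the oscillation of `g` at the
scale of the mesh. Approximating an integrable `f` by a compactly supported continuous function
therefore gives `T_M f → f` in `L¹`. Linear independence of finitely many vectors of a normed space
is an open condition, so the independence of the classes of the `f_j` in `L¹[0,1]` passes to the
`T_M f_j` for all large `M`.
-/

open MeasureTheory Filter Finset Topology

noncomputable section

structure IsMeasurablePartition {α ι : Type*} [MeasurableSpace α] (P : ι → Set α) (s : Set α) :
    Prop where
  measurableSet : ∀ m, MeasurableSet (P m)
  pairwise_disjoint : Pairwise fun m m' => Disjoint (P m) (P m')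
  iUnion_eq : ⋃ m, P m = s

/-- When `μ (P m)` is `0` or `∞`, the coefficient of `P m` is `0` (division by
`μ.real (P m) = 0`), so no positivity assumption on the pieces is needed. -/
def histogram {α ι : Type*} [MeasurableSpace α] [Fintype ι] (μ : Measure α) (P : ι → Set α)
    (h : α → ℝ) (u : α) : ℝ :=
  ∑ m, ((∫ v in P m, h v ∂μ) / μ.real (P m)) * (P m).indicator 1 u

section General

variable {α ι : Type*} [MeasurableSpace α] {μ : Measure α} {P : ι → Set α}
  {s : Set α}

namespace IsMeasurablePartition

theorem subset (hP : IsMeasurablePartition P s) (m : ι) : P m ⊆ s :=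
  hP.iUnion_eq ▸ Set.subset_iUnion P m

theorem setIntegral_eq_sum [Fintype ι] (hP : IsMeasurablePartition P s) {φ : α → ℝ}
    (hφ : IntegrableOn φ s μ) : ∫ u in s, φ u ∂μ = ∑ m, ∫ u in P m, φ u ∂μ := by
  rw [← hP.iUnion_eq]
  exact integral_iUnion_fintype hP.measurableSet hP.pairwise_disjoint
    fun m => hφ.mono_set (hP.subset m)

end IsMeasurablePartition

variable [Fintype ι]

theorem histogram_eq_of_mem (hP : Pairwise fun m m' => Disjoint (P m) (P m')) (h : α → ℝ)
    {m : ι} {u : α} (hu : u ∈ P m) :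
    histogram μ P h u = (∫ v in P m, h v ∂μ) / μ.real (P m) := by
  rw [histogram, Finset.sum_eq_single m]
  · simp [hu]
  · intro m' _ hm'
    simp [Set.indicator_of_notMem fun hu' => (hP hm').ne_of_mem hu' hu rfl]
  · simp

theorem integrableOn_histogram (hP : ∀ m, MeasurableSet (P m)) (hs : μ s ≠ ⊤) (h : α → ℝ) :
    IntegrableOn (histogram μ P h) s μ := by
  have : Fact (μ s < ⊤) := ⟨hs.lt_top⟩
  refine integrable_finsetSum _ fun m _ => Integrable.const_mul ?_ _
  exact (integrable_const 1).indicator (hP m)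

theorem histogram_sub (hP : IsMeasurablePartition P s) {f g : α → ℝ} (hf : IntegrableOn f s μ)
    (hg : IntegrableOn g s μ) : histogram μ P (f - g) = histogram μ P f - histogram μ P g := by
  ext u
  simp only [histogram, Pi.sub_apply, ← Finset.sum_sub_distrib]
  refine Finset.sum_congr rfl fun m _ => ?_
  rw [integral_sub (hf.mono_set (hP.subset m)) (hg.mono_set (hP.subset m))]
  ring

theorem setIntegral_abs_histogram_le (hP : IsMeasurablePartition P s) (hs : μ s ≠ ⊤)
    {h : α → ℝ} (hh : IntegrableOn h s μ) :
    ∫ u in s, |histogram μ P h u| ∂μ ≤ ∫ u in s, |h u| ∂μ := by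
  rw [hP.setIntegral_eq_sum (integrableOn_histogram hP.measurableSet hs h).abs,
    hP.setIntegral_eq_sum hh.abs]
  refine Finset.sum_le_sum fun m _ => ?_
  calc ∫ u in P m, |histogram μ P h u| ∂μ
      = ∫ _ in P m, |(∫ v in P m, h v ∂μ) / μ.real (P m)| ∂μ :=
        setIntegral_congr_fun (hP.measurableSet m) fun u hu => by
          rw [histogram_eq_of_mem hP.pairwise_disjoint h hu]
    _ = μ.real (P m) * (|∫ v in P m, h v ∂μ| / μ.real (P m)) := by
        rw [setIntegral_const, smul_eq_mul, abs_div, abs_of_nonneg measureReal_nonneg]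
    _ ≤ |∫ v in P m, h v ∂μ| := by
        rcases eq_or_ne (μ.real (P m)) 0 with hm | hm
        · simp [hm]
        · rw [mul_div_cancel₀ _ hm]
    _ ≤ ∫ v in P m, |h v| ∂μ := abs_integral_le_integral_abs

theorem abs_setIntegral_div_sub_le {Q : Set α} (hQ₀ : μ Q ≠ 0) (hQ : μ Q ≠ ⊤) {g : α → ℝ}
    (hg : IntegrableOn g Q μ) {u : α} {ε : ℝ} (hosc : ∀ v ∈ Q, |g v - g u| ≤ ε) :
    |(∫ v in Q, g v ∂μ) / μ.real Q - g u| ≤ ε := by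
  have hQr : 0 < μ.real Q := ENNReal.toReal_pos hQ₀ hQ
  have hint : ∫ v in Q, (g v - g u) ∂μ = (∫ v in Q, g v ∂μ) - μ.real Q * g u := by
    rw [integral_sub hg (integrableOn_const hQ), setIntegral_const, smul_eq_mul]
  have hbound : |∫ v in Q, (g v - g u) ∂μ| ≤ ε * μ.real Q :=
    norm_setIntegral_le_of_norm_le_const (f := fun v => g v - g u) hQ.lt_top hosc
  rw [hint] at hbound
  rwa [← mul_div_cancel_left₀ (g u) hQr.ne', ← sub_div, abs_div, abs_of_pos hQr,
    div_le_iff₀ hQr]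

theorem setIntegral_abs_histogram_sub_le (hP : IsMeasurablePartition P s) (hs : μ s ≠ ⊤)
    {g : α → ℝ} (hg : IntegrableOn g s μ) {ε : ℝ}
    (hosc : ∀ m, ∀ u ∈ P m, ∀ v ∈ P m, |g v - g u| ≤ ε) :
    ∫ u in s, |histogram μ P g u - g u| ∂μ ≤ μ.real s * ε := by
  rw [← smul_eq_mul, ← setIntegral_const, hP.setIntegral_eq_sum (integrableOn_const hs),
    hP.setIntegral_eq_sum (φ := fun u => |histogram μ P g u - g u|)
      ((integrableOn_histogram hP.measurableSet hs g).sub hg).abs]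
  refine Finset.sum_le_sum fun m _ => ?_
  have hPm : μ (P m) ≠ ⊤ := measure_ne_top_of_subset (hP.subset m) hs
  rcases eq_or_ne (μ (P m)) 0 with h₀ | h₀
  · simp [Measure.restrict_eq_zero.2 h₀]
  refine setIntegral_mono_on (((integrableOn_histogram hP.measurableSet hPm g).sub
    (hg.mono_set (hP.subset m))).abs) (integrableOn_const hPm) (hP.measurableSet m)
    fun u hu => ?_
  rw [histogram_eq_of_mem hP.pairwise_disjoint g hu]
  exact abs_setIntegral_div_sub_le h₀ hPm (hg.mono_set (hP.subset m)) (hosc m u hu)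

end General

theorem integral_abs_sub_le_add {α : Type*} [MeasurableSpace α] {μ : Measure α} {a b c : α → ℝ}
    (ha : Integrable a μ) (hb : Integrable b μ) (hc : Integrable c μ) :
    ∫ u, |a u - c u| ∂μ ≤ ∫ u, |a u - b u| ∂μ + ∫ u, |b u - c u| ∂μ := by
  rw [← integral_add (f := fun u => |a u - b u|) (g := fun u => |b u - c u|) (ha.sub hb).abs
    (hb.sub hc).abs]
  exact integral_mono (ha.sub hc).abs ((ha.sub hb).abs.add (hb.sub hc).abs)
    fun u => abs_sub_le (a u) (b u) (c u)

theorem Integrable.sum_smul_toL1 {α ι : Type*} [MeasurableSpace α] {μ : Measure α}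
    {h : ι → α → ℝ} (hh : ∀ j, Integrable (h j) μ) (c : ι → ℝ) (t : Finset ι) :
    ∑ j ∈ t, c j • (hh j).toL1 (h j) =
      (integrable_finsetSum t fun j _ => (hh j).const_mul (c j)).toL1
        (fun u => ∑ j ∈ t, c j * h j u) := by
  classical
  induction t using Finset.induction_on with
  | empty => rfl
  | insert j t hj ih => simp only [Finset.sum_insert hj, ih]; rfl

theorem linearIndependent_toL1_iff {α ι : Type*} [MeasurableSpace α] [Fintype ι]
    {μ : Measure α} {h : ι → α → ℝ} (hh : ∀ j, Integrable (h j) μ) :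
    LinearIndependent ℝ (fun j => (hh j).toL1 (h j)) ↔
      ∀ c : ι → ℝ, (∀ᵐ u ∂μ, ∑ j, c j * h j u = 0) → c = 0 := by
  simp only [Fintype.linearIndependent_iff, Integrable.sum_smul_toL1 hh, funext_iff]
  refine forall_congr' fun c => imp_congr_left ?_
  rw [← Integrable.toL1_zero (integrable_zero α ℝ μ), Integrable.toL1_eq_toL1_iff]
  rfl

theorem Set.OrdConnected.abs_sub_le_volume_real {Q : Set ℝ} (hQ : Q.OrdConnected)
    (hQ' : volume Q ≠ ⊤) {u v : ℝ} (hu : u ∈ Q) (hv : v ∈ Q) : |u - v| ≤ volume.real Q := by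
  wlog h : v ≤ u generalizing u v
  · rw [abs_sub_comm]; exact this hv hu (le_of_not_ge h)
  calc |u - v| = volume.real (Set.Icc v u) := by
        rw [Real.volume_real_Icc_of_le h, abs_of_nonneg (sub_nonneg.2 h)]
    _ ≤ volume.real Q := measureReal_mono (hQ.out hv hu) hQ'

theorem exists_forall_integral_abs_histogram_sub_le {s : Set ℝ} (hsm : MeasurableSet s)
    (hs : volume s ≠ ⊤) {f : ℝ → ℝ} (hf : IntegrableOn f s) {ε : ℝ} (hε : 0 < ε) :
    ∃ δ > 0, ∀ {ι : Type*} [Fintype ι] (P : ι → Set ℝ), IsMeasurablePartition P s →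
      (∀ m, (P m).OrdConnected) → (∀ m, volume.real (P m) < δ) →
      ∫ u in s, |histogram volume P f u - f u| ≤ ε := by
  have hF := hf.integrable_indicator hsm
  obtain ⟨g, hg_supp, hfg, hg_cont, hg_int⟩ :=
    hF.exists_hasCompactSupport_integral_sub_le (by positivity : 0 < ε / 3)
  have hfg' : ∫ u in s, |f u - g u| ≤ ε / 3 :=
    calc ∫ u in s, |f u - g u| = ∫ u in s, ‖s.indicator f u - g u‖ :=
          setIntegral_congr_fun hsm fun u hu => by simp [hu]
      _ ≤ ∫ u, ‖s.indicator f u - g u‖ :=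
          setIntegral_le_integral (hF.sub hg_int).norm
            (Eventually.of_forall fun _ => norm_nonneg _)
      _ ≤ ε / 3 := hfg
  set η := ε / 3 / (volume.real s + 1)
  obtain ⟨δ, hδ, hmod⟩ := Metric.uniformContinuous_iff_le.1
    (hg_supp.uniformContinuous_of_continuous hg_cont) η (by positivity)
  refine ⟨δ, hδ, fun P hP hord hmesh => ?_⟩
  have hosc : ∀ m, ∀ u ∈ P m, ∀ v ∈ P m, |g v - g u| ≤ η := fun m u hu v hv =>
    hmod <| ((hord m).abs_sub_le_volume_real (measure_ne_top_of_subset (hP.subset m) hs) hv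
      hu).trans (hmesh m).le
  have hTf := integrableOn_histogram hP.measurableSet hs (μ := volume) f
  have hTg := integrableOn_histogram hP.measurableSet hs (μ := volume) g
  have hgs : IntegrableOn g s := hg_int.integrableOn
  have hTfg : ∀ u, histogram volume P f u - histogram volume P g u
      = histogram volume P (f - g) u := fun u => by rw [histogram_sub hP hf hgs]; rfl
  calc ∫ u in s, |histogram volume P f u - f u|
      ≤ (∫ u in s, |histogram volume P (f - g) u|)
        + ((∫ u in s, |histogram volume P g u - g u|) + ∫ u in s, |g u - f u|) := by
        simp only [← hTfg]
        exact (integral_abs_sub_le_add hTf hTg hf).trans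
          (add_le_add le_rfl (integral_abs_sub_le_add hTg hgs hf))
    _ ≤ ε / 3 + (volume.real s * η + ε / 3) := by
        refine add_le_add ((setIntegral_abs_histogram_le hP hs (hf.sub hgs)).trans hfg')
          (add_le_add (setIntegral_abs_histogram_sub_le hP hs hgs hosc) ?_)
        simpa only [abs_sub_comm] using hfg'
    _ ≤ ε := by
        have : volume.real s * η ≤ ε / 3 := by
          rw [mul_div_left_comm]
          exact mul_le_of_le_one_right (by positivity)
            ((div_le_one (by positivity)).2 (by linarith))
        linarith

theorem tendsto_toL1_histogram {β : Type*} {l : Filter β} {ι : β → Type*}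
    [∀ M, Fintype (ι M)] {s : Set ℝ} (hsm : MeasurableSet s) (hs : volume s ≠ ⊤)
    {I : ∀ M, ι M → Set ℝ} (hI : ∀ M, IsMeasurablePartition (I M) s)
    (hord : ∀ M m, (I M m).OrdConnected)
    (hmesh : ∀ δ > 0, ∀ᶠ M in l, ∀ m, volume.real (I M m) < δ) {f : ℝ → ℝ}
    (hf : IntegrableOn f s volume) :
    Tendsto (fun M => (integrableOn_histogram (hI M).measurableSet hs f).toL1 _) l
      (𝓝 (hf.toL1 f)) := by
  refine Metric.tendsto_nhds.2 fun ε hε => ?_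
  obtain ⟨δ, hδ, hclose⟩ :=
    exists_forall_integral_abs_histogram_sub_le hsm hs hf (half_pos hε)
  filter_upwards [hmesh δ hδ] with M hM
  rw [dist_eq_norm]
  exact (L1.norm_of_fun_eq_integral_norm
    ((integrableOn_histogram (hI M).measurableSet hs f).sub hf)).trans_lt
    ((hclose (I M) (hI M) (hord M) hM).trans_lt (half_lt_self hε))

theorem stmt_15_general (k : ℕ) (f : Fin k → ℝ → ℝ)
    -- `f_1,…,f_k` are probability densities on `[0,1]`
    (hf : ∀ j, Measurable (f j) ∧ (∀ u, 0 ≤ f j u) ∧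
      ∫ u in Set.Icc (0:ℝ) 1, f j u = 1)
    -- linear independence of the measures `f_j dx`
    (hindep : ∀ α : Fin k → ℝ,
      (∀ᵐ u ∂(volume.restrict (Set.Icc (0:ℝ) 1)), ∑ j, α j * f j u = 0) → α = 0)
    -- the partitions, made of intervals with nonempty interior
    (I : (M : ℕ) → Fin (M+1) → Set ℝ)
    (hpart : ∀ M, (∀ m, MeasurableSet (I M m)) ∧
      (Pairwise fun m m' => Disjoint (I M m) (I M m')) ∧
      (⋃ m, I M m) = Set.Icc (0:ℝ) 1)
    (hint : ∀ M m, (I M m).OrdConnected ∧ (interior (I M m)).Nonempty)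
    -- the mesh tends to `0`
    (hmesh : ∀ ε > 0, ∃ M₀, ∀ M ≥ M₀, ∀ m, (volume (I M m)).toReal < ε) :
    ∃ M₀, ∀ M ≥ M₀, ∀ α : Fin k → ℝ,
      (∀ᵐ u ∂(volume.restrict (Set.Icc (0:ℝ) 1)),
        ∑ j, α j * (∑ m, ((∫ v in I M m, f j v) / (volume (I M m)).toReal)
          * (I M m).indicator 1 u) = 0) → α = 0 := by
  have hs : volume (Set.Icc (0:ℝ) 1) ≠ ⊤ := by simp
  have hI : ∀ M, IsMeasurablePartition (I M) (Set.Icc 0 1) := fun M =>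
    ⟨(hpart M).1, (hpart M).2.1, (hpart M).2.2⟩
  have hfi : ∀ j, IntegrableOn (f j) (Set.Icc 0 1) := fun j =>
    Integrable.of_integral_ne_zero (by simp [(hf j).2.2])
  have hconv : ∀ j, Tendsto
      (fun M => (integrableOn_histogram (hI M).measurableSet hs (f j)).toL1 _) atTop
      (𝓝 ((hfi j).toL1 (f j))) := fun j =>
    tendsto_toL1_histogram measurableSet_Icc hs hI (fun M m => (hint M m).1)
      (fun δ hδ => eventually_atTop.2 (hmesh δ hδ)) (hfi j)
  obtain ⟨M₀, hM₀⟩ := eventually_atTop.1 <| (tendsto_pi_nhds.2 hconv).eventually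
    ((linearIndependent_toL1_iff hfi).2 hindep).eventually
  exact ⟨M₀, fun M hM => (linearIndependent_toL1_iff _).1 (hM₀ M hM)⟩

/-- The first step of the proof of Proposition 1 of the paper: if the
probability densities `f_1,…,f_k` on `[0,1]` are linearly independent (as
measures) and `(𝓘_M)` is a sequence of interval partitions of `[0,1]` with
mesh tending to `0`, then for all sufficiently large `M` the histogram
approximations `f_{1;M},…,f_{k;M}` are also linearly independent. -/
theorem stmt_15 (k : ℕ) (hk : 1 ≤ k) (f : Fin k → ℝ → ℝ)
    -- `f_1,…,f_k` are probability densities on `[0,1]`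
    (hf : ∀ j, Measurable (f j) ∧ (∀ u, 0 ≤ f j u) ∧
      ∫ u in Set.Icc (0:ℝ) 1, f j u = 1)
    -- linear independence of the measures `f_j dx`
    (hindep : ∀ α : Fin k → ℝ,
      (∀ᵐ u ∂(volume.restrict (Set.Icc (0:ℝ) 1)), ∑ j, α j * f j u = 0) → α = 0)
    -- the partitions, made of intervals with nonempty interior
    (I : (M : ℕ) → Fin (M+1) → Set ℝ)
    (hpart : ∀ M, (∀ m, MeasurableSet (I M m)) ∧
      (Pairwise fun m m' => Disjoint (I M m) (I M m')) ∧
      (⋃ m, I M m) = Set.Icc (0:ℝ) 1)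
    (hint : ∀ M m, (I M m).OrdConnected ∧ (interior (I M m)).Nonempty)
    -- the mesh tends to `0`
    (hmesh : ∀ ε > 0, ∃ M₀, ∀ M ≥ M₀, ∀ m, (volume (I M m)).toReal < ε) :
    ∃ M₀, ∀ M ≥ M₀, ∀ α : Fin k → ℝ,
      (∀ᵐ u ∂(volume.restrict (Set.Icc (0:ℝ) 1)),
        ∑ j, α j * (∑ m, ((∫ v in I M m, f j v) / (volume (I M m)).toReal)
          * (I M m).indicator 1 u) = 0) → α = 0 :=
  stmt_15_general k f hf hindep I hpart hint hmesh
end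
end
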